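/- Let W be a type, S a subset of W, and f, g, h : W → [0,1]. If for every w ∈ S, (f w) ⊔ ((g w) ⇒ (h w)) = 1, then (⨆_{w ∈ S} f w) ⊔ ((⨆_{w ∈ S} g w) ⇒ (⨆_{w ∈ S} h w)) = 1. (This is soundness of the derived rule (R_◇): from φ ∨ (ψ → χ) infer ◇φ ∨ (◇ψ → ◇χ), at any world of any crisp Gödel-Kripke model whose successors all satisfy the premise.) -/
import Mathlib


open unitInterval

instance : Fact ((0:ℝ) ≤ 1) := ⟨zero_le_one⟩

noncomputable instance : CompleteLattice unitInterval := Set.Icc.completeLattice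

/-- Gödel implication on the unit interval. -/
noncomputable def gimp (a b : unitInterval) : unitInterval := if a ≤ b then 1 else b

infixr:60 " ⇒ " => gimp

/-- Gödel negation on the unit interval. -/
noncomputable def gneg (a : unitInterval) : unitInterval := a ⇒ 0

theorem soundness_R_diamond {W : Type*} (S : Set W) (f g h : W → unitInterval)
    (hyp : ∀ w ∈ S, (f w ⊔ ((g w) ⇒ (h w))) = 1) :
    ((⨆ w ∈ S, f w) ⊔ ((⨆ w ∈ S, g w) ⇒ (⨆ w ∈ S, h w))) = 1 := by
  by_cases hGH : (⨆ w ∈ S, g w) ≤ (⨆ w ∈ S, h w)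
  · rw [gimp, if_pos hGH]
    exact le_antisymm (sup_le le_one' le_rfl) le_sup_right
  · -- show the left disjunct is 1
    have hF : (⨆ w ∈ S, f w) = 1 := by
      by_contra hne
      apply hGH
      apply iSup₂_le
      intro w hw
      have hfw : f w ≠ 1 := by
        intro h1
        apply hne
        exact le_antisymm le_one' (h1 ▸ le_iSup₂ (f := fun w _ => f w) w hw)
      have hmax := hyp w hw
      have hgh : (g w ⇒ h w) = 1 := by
        rcases le_total (f w) (g w ⇒ h w) with hle | hle
        · rwa [sup_eq_right.mpr hle] at hmax
        · exact absurd (sup_eq_left.mpr hle ▸ hmax) hfw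
      have : g w ≤ h w := by
        by_contra hgle
        rw [gimp, if_neg hgle] at hgh
        exact hgle (hgh ▸ le_one')
      exact this.trans (le_iSup₂ (f := fun w _ => h w) w hw)
    rw [hF]
    exact le_antisymm (sup_le le_rfl le_one') le_sup_left
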